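/- arXiv:1304.0224 — 2 statements merged into one kernel-verified Lean document; each statement's English description precedes it below -/
import Mathlib

section
/- Let n ≥ 4 and let V be a left K-vector space over a division ring K with finrank V = n + 1. For all lines a₁, b₁, a₂, b₂ of V the following are equivalent: (i) a₁ ∼ b₁, a₂ ∼ b₂ and a₁ ⊓ b₁ ≠ a₂ ⊓ b₂; (ii) for every line g there exist lines h₁, h₂ such that a₁ ∼ b₁ and a₂ ∼ b₂, and moreover either (S̄(a₁,b₁,h₁) and S̄(a₂,b₂,h₂) and S(h₁,h₂,g)) or (S̄(a₁,b₁,g) or S̄(a₂,b₂,g)). -/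
/-- `a` is a projective line: a submodule of finrank 2. -/
def PLine {K V : Type*} [DivisionRing K] [AddCommGroup V] [Module K V]
    (a : Submodule K V) : Prop := Module.finrank K a = 2

/-- `p` is a projective point: a submodule of finrank 1. -/
def PPoint {K V : Type*} [DivisionRing K] [AddCommGroup V] [Module K V]
    (p : Submodule K V) : Prop := Module.finrank K p = 1

/-- Two lines intersect: they are different and have nontrivial intersection. -/
def PMeets {K V : Type*} [DivisionRing K] [AddCommGroup V] [Module K V]
    (a b : Submodule K V) : Prop := a ≠ b ∧ a ⊓ b ≠ ⊥

/-- `S a b c`: the lines `a, b, c` are pairwise distinct and concurrent. -/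
def PS {K V : Type*} [DivisionRing K] [AddCommGroup V] [Module K V]
    (a b c : Submodule K V) : Prop :=
  a ≠ b ∧ a ≠ c ∧ b ≠ c ∧ ∃ p : Submodule K V, PPoint p ∧ p ≤ a ∧ p ≤ b ∧ p ≤ c

/-- `S̄ a b c`: the line `c` passes through the intersection point of `a` and `b`. -/
def PSbar {K V : Type*} [DivisionRing K] [AddCommGroup V] [Module K V]
    (a b c : Submodule K V) : Prop := PMeets a b ∧ a ⊓ b ≤ c

section Helpers

variable {K V : Type*} [DivisionRing K] [AddCommGroup V] [Module K V] [FiniteDimensional K V]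

/-- Two submodules with equal finrank, one contained in the other, are equal. -/
lemma fr_eq_of_le {a b : Submodule K V} (h : a ≤ b)
    (hfr : Module.finrank K a = Module.finrank K b) : a = b :=
  Submodule.eq_of_le_of_finrank_eq h hfr

lemma line_eq_of_le {a b : Submodule K V} (ha : PLine a) (hb : PLine b) (h : a ≤ b) : a = b :=
  fr_eq_of_le h (ha.trans hb.symm)

lemma point_eq_of_le {a b : Submodule K V} (ha : PPoint a) (hb : PPoint b) (h : a ≤ b) : a = b :=
  fr_eq_of_le h (ha.trans hb.symm)

lemma point_inf_eq_bot {p q : Submodule K V} (hp : PPoint p) (hq : PPoint q) (hne : p ≠ q) :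
    p ⊓ q = ⊥ := by
  by_contra h
  have h1 : 1 ≤ Module.finrank K (p ⊓ q : Submodule K V) := Submodule.one_le_finrank_iff.mpr h
  have h2 : p ⊓ q = p := Submodule.eq_of_le_of_finrank_le inf_le_left
    (by rw [show Module.finrank K p = 1 from hp]; exact h1)
  have h3 : p ⊓ q = q := Submodule.eq_of_le_of_finrank_le inf_le_right
    (by rw [show Module.finrank K q = 1 from hq]; exact h1)
  exact hne (h2 ▸ h3)

/-- The join of two distinct points is a line. -/
lemma line_sup_points {p q : Submodule K V} (hp : PPoint p) (hq : PPoint q) (hne : p ≠ q) :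
    PLine (p ⊔ q) := by
  have h := Submodule.finrank_sup_add_finrank_inf_eq p q
  rw [point_inf_eq_bot hp hq hne] at h
  have hb : Module.finrank K (⊥ : Submodule K V) = 0 := finrank_bot K V
  have hp' : Module.finrank K p = 1 := hp
  have hq' : Module.finrank K q = 1 := hq
  show Module.finrank K ↥(p ⊔ q) = 2
  omega

/-- The intersection of two meeting lines is a point. -/
lemma point_of_meets {a b : Submodule K V} (ha : PLine a) (hb : PLine b) (hm : PMeets a b) :
    PPoint (a ⊓ b) := by
  have h1 : 1 ≤ Module.finrank K (a ⊓ b : Submodule K V) := Submodule.one_le_finrank_iff.mpr hm.2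
  have h2 : Module.finrank K (a ⊓ b : Submodule K V) ≤ 2 := by
    have := Submodule.finrank_mono (inf_le_left (a := a) (b := b))
    have ha' : Module.finrank K a = 2 := ha
    omega
  show Module.finrank K (a ⊓ b : Submodule K V) = 1
  rcases Nat.lt_or_ge (Module.finrank K (a ⊓ b : Submodule K V)) 2 with h | h
  · omega
  · exfalso
    have e1 : a ⊓ b = a := Submodule.eq_of_le_of_finrank_le inf_le_left
      (by rw [show Module.finrank K a = 2 from ha]; exact h)
    have e2 : a ⊓ b = b := Submodule.eq_of_le_of_finrank_le inf_le_right
      (by rw [show Module.finrank K b = 2 from hb]; exact h)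
    exact hm.1 (e1 ▸ e2)

/-- If `S` is not contained in `T`, there is a point inside `S` not contained in `T`. -/
lemma exists_point_le_not_le {S T : Submodule K V} (h : ¬ S ≤ T) :
    ∃ p : Submodule K V, PPoint p ∧ p ≤ S ∧ ¬ p ≤ T := by
  obtain ⟨x, hxS, hxT⟩ := SetLike.not_le_iff_exists.mp h
  have hx0 : x ≠ 0 := fun h0 => hxT (h0 ▸ T.zero_mem)
  refine ⟨Submodule.span K {x}, finrank_span_singleton hx0, ?_, ?_⟩
  · exact (Submodule.span_singleton_le_iff_mem x S).mpr hxS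
  · exact fun hle => hxT ((Submodule.span_singleton_le_iff_mem x T).mp hle)

/-- Any subspace of dimension `< dim V` avoids some point. -/
lemma exists_point_not_le {S : Submodule K V}
    (h : Module.finrank K S < Module.finrank K V) :
    ∃ p : Submodule K V, PPoint p ∧ ¬ p ≤ S := by
  have hne : ¬ (⊤ : Submodule K V) ≤ S := by
    intro hle
    rw [top_le_iff.mp hle, finrank_top] at h
    omega
  obtain ⟨p, hp, _, hpS⟩ := exists_point_le_not_le hne
  exact ⟨p, hp, hpS⟩

/-- For any point `P` in a space of dimension ≥ 3, there is a line avoiding `P`. -/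
lemma exists_line_not_through {P : Submodule K V} (hP : PPoint P)
    (hd : 3 ≤ Module.finrank K V) :
    ∃ g : Submodule K V, PLine g ∧ ¬ P ≤ g := by
  have hP' : Module.finrank K P = 1 := hP
  obtain ⟨Q₁, hQ₁, hQ₁P⟩ := exists_point_not_le (S := P) (by omega)
  have hPQ₁ : P ≠ Q₁ := fun h => hQ₁P (h ▸ le_refl P)
  have hL : PLine (P ⊔ Q₁) := line_sup_points hP hQ₁ hPQ₁
  have hL' : Module.finrank K (P ⊔ Q₁ : Submodule K V) = 2 := hL
  obtain ⟨Q₂, hQ₂, hQ₂L⟩ := exists_point_not_le (S := P ⊔ Q₁) (by omega)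
  have hQ12 : Q₁ ≠ Q₂ := fun h => hQ₂L (h ▸ le_sup_right)
  refine ⟨Q₁ ⊔ Q₂, line_sup_points hQ₁ hQ₂ hQ12, fun hle => ?_⟩
  have h1 : P ⊔ Q₁ ≤ Q₁ ⊔ Q₂ := sup_le hle le_sup_left
  have h2 : P ⊔ Q₁ = Q₁ ⊔ Q₂ := line_eq_of_le hL (line_sup_points hQ₁ hQ₂ hQ12) h1
  exact hQ₂L (h2 ▸ le_sup_right)

end Helpers

theorem statement1 {K V : Type*} [DivisionRing K] [AddCommGroup V] [Module K V]
    {n : ℕ} (hn : 4 ≤ n) (hdim : Module.finrank K V = n + 1)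
    (a₁ b₁ a₂ b₂ : Submodule K V)
    (ha₁ : PLine a₁) (hb₁ : PLine b₁) (ha₂ : PLine a₂) (hb₂ : PLine b₂) :
    (PMeets a₁ b₁ ∧ PMeets a₂ b₂ ∧ a₁ ⊓ b₁ ≠ a₂ ⊓ b₂) ↔
    (∀ g : Submodule K V, PLine g → ∃ h₁ h₂ : Submodule K V, PLine h₁ ∧ PLine h₂ ∧
      PMeets a₁ b₁ ∧ PMeets a₂ b₂ ∧
      ((PSbar a₁ b₁ h₁ ∧ PSbar a₂ b₂ h₂ ∧ PS h₁ h₂ g) ∨ (PSbar a₁ b₁ g ∨ PSbar a₂ b₂ g))) := by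
  haveI : FiniteDimensional K V := FiniteDimensional.of_finrank_pos (by omega)
  constructor
  · rintro ⟨m₁, m₂, hne⟩
    intro g hg
    set P₁ := a₁ ⊓ b₁ with hP₁def
    set P₂ := a₂ ⊓ b₂ with hP₂def
    have hP₁ : PPoint P₁ := point_of_meets ha₁ hb₁ m₁
    have hP₂ : PPoint P₂ := point_of_meets ha₂ hb₂ m₂
    by_cases h1g : P₁ ≤ g
    · exact ⟨a₁, a₂, ha₁, ha₂, m₁, m₂, Or.inr (Or.inl ⟨m₁, h1g⟩)⟩
    by_cases h2g : P₂ ≤ g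
    · exact ⟨a₁, a₂, ha₁, ha₂, m₁, m₂, Or.inr (Or.inr ⟨m₂, h2g⟩)⟩
    -- main case: choose Q on g not on the line through P₁ and P₂
    have hL : PLine (P₁ ⊔ P₂) := line_sup_points hP₁ hP₂ hne
    have hgL : ¬ g ≤ P₁ ⊔ P₂ := by
      intro hle
      exact h1g ((line_eq_of_le hg hL hle) ▸ le_sup_left)
    obtain ⟨Q, hQ, hQg, hQL⟩ := exists_point_le_not_le hgL
    have hQP₁ : P₁ ≠ Q := fun h => hQL (h ▸ le_sup_left)
    have hQP₂ : P₂ ≠ Q := fun h => hQL (h ▸ le_sup_right)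
    have hh₁ : PLine (P₁ ⊔ Q) := line_sup_points hP₁ hQ hQP₁
    have hh₂ : PLine (P₂ ⊔ Q) := line_sup_points hP₂ hQ hQP₂
    have hne1g : P₁ ⊔ Q ≠ g := fun h => h1g (h ▸ le_sup_left)
    have hne2g : P₂ ⊔ Q ≠ g := fun h => h2g (h ▸ le_sup_left)
    have hne12 : P₁ ⊔ Q ≠ P₂ ⊔ Q := by
      intro h
      have hP₂h : P₂ ≤ P₁ ⊔ Q := h ▸ le_sup_left
      have hLh : P₁ ⊔ P₂ ≤ P₁ ⊔ Q := sup_le le_sup_left hP₂h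
      have : P₁ ⊔ P₂ = P₁ ⊔ Q := line_eq_of_le hL hh₁ hLh
      exact hQL (this ▸ le_sup_right)
    refine ⟨P₁ ⊔ Q, P₂ ⊔ Q, hh₁, hh₂, m₁, m₂, Or.inl ⟨⟨m₁, le_sup_left⟩, ⟨m₂, le_sup_left⟩,
      hne12, hne1g, hne2g, Q, hQ, le_sup_right, le_sup_right, hQg⟩⟩
  · intro h
    obtain ⟨_, _, _, _, m₁, m₂, _⟩ := h a₁ ha₁
    refine ⟨m₁, m₂, ?_⟩
    intro heq
    set P := a₁ ⊓ b₁ with hPdef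
    have hP : PPoint P := point_of_meets ha₁ hb₁ m₁
    obtain ⟨g, hg, hPg⟩ := exists_line_not_through hP (by omega)
    obtain ⟨h₁, h₂, hl1, hl2, _, _, hdisj⟩ := h g hg
    rcases hdisj with ⟨⟨_, hPh₁⟩, ⟨_, hPh₂⟩, hS⟩ | ⟨_, hle⟩ | ⟨_, hle⟩
    · obtain ⟨hne12, _, _, Q, hQpt, hQ1, hQ2, hQg⟩ := hS
      rw [← heq] at hPh₂
      by_cases hPQ : P = Q
      · exact hPg (hPQ ▸ hQg)
      · have hPQl : PLine (P ⊔ Q) := line_sup_points hP hQpt hPQ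
        have e1 : P ⊔ Q = h₁ := line_eq_of_le hPQl hl1 (sup_le hPh₁ hQ1)
        have e2 : P ⊔ Q = h₂ := line_eq_of_le hPQl hl2 (sup_le hPh₂ hQ2)
        exact hne12 (e1 ▸ e2)
    · exact hPg hle
    · rw [← heq] at hle
      exact hPg hle
end

section
/- Let n ≥ 5 be odd, let V be a left K-vector space over a division ring K with finrank V = n + 1, and set m = (n−1)/2. For all lines a₁, b₁ of V the following are equivalent: (i) a₁ = b₁ or a₁ ⊓ b₁ = ⊥; (ii) a₁ = b₁, or there exist lines a₂, …, a_m such that for every line g there exist lines b₂, …, b_{m+1} and c₂, …, c_{m+1} with (setting c₁ := b₁): for each 2 ≤ i ≤ m+1, bᵢ meets a_{i−1} and b_{i−1} in two distinct points and cᵢ meets a_{i−1} and c_{i−1} in two distinct points; and b_{m+1} ∼ g, c_{m+1} ∼ g and b_{m+1} ⊓ g ≠ c_{m+1} ⊓ g. -/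
/-- `x` meets the lines `y` and `z` in two distinct points. -/
def PMeetsTwo {K V : Type*} [DivisionRing K] [AddCommGroup V] [Module K V]
    (x y z : Submodule K V) : Prop := PMeets x y ∧ PMeets x z ∧ x ⊓ y ≠ x ⊓ z

open Submodule Module

section Lines

variable {K V : Type*} [DivisionRing K] [AddCommGroup V] [Module K V]

theorem PLine.ne_bot {g : Submodule K V} (hg : PLine g) : g ≠ ⊥ := by
  rintro rfl
  simp [PLine] at hg

theorem pLine_span_pair {x y : V} (h : LinearIndependent K ![x, y]) :
    PLine (span K {x, y}) := by
  rw [PLine, ← Matrix.range_cons_cons_empty x y ![], finrank_span_eq_card h]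
  simp

theorem linearIndependent_pair_of_disjoint {U A : Submodule K V} (hUA : Disjoint U A) {r s : V}
    (hr : r ∈ U) (hr0 : r ≠ 0) (hs : s ∈ A) (hs0 : s ≠ 0) : LinearIndependent K ![r, s] := by
  refine LinearIndependent.pair_iff.mpr fun α β h => ?_
  have hαr : α • r = 0 := by
    refine disjoint_def.mp hUA _ (U.smul_mem α hr) ?_
    rw [eq_neg_of_add_eq_zero_left h]
    exact A.neg_mem (A.smul_mem β hs)
  rw [hαr, zero_add] at h
  exact ⟨(smul_eq_zero.mp hαr).resolve_right hr0, (smul_eq_zero.mp h).resolve_right hs0⟩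

theorem exists_ne_zero_mem_span_singleton {B : Submodule K V} (hB : B ≠ ⊥) {p : V}
    (hp : p ∈ B) : ∃ r ∈ B, r ≠ 0 ∧ p ∈ K ∙ r := by
  by_cases hp0 : p = 0
  · obtain ⟨r, hr, hr0⟩ := (Submodule.ne_bot_iff B).mp hB
    exact ⟨r, hr, hr0, hp0 ▸ zero_mem _⟩
  · exact ⟨p, hp, hp0, mem_span_singleton_self p⟩

theorem PLine.exists_pair {g : Submodule K V} (hg : PLine g) :
    ∃ u ∈ g, u ≠ 0 ∧ ∃ w ∈ g, w ∉ K ∙ u := by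
  obtain ⟨u, hug, hu0⟩ := (Submodule.ne_bot_iff g).mp hg.ne_bot
  refine ⟨u, hug, hu0, SetLike.not_le_iff_exists.mp fun h => ?_⟩
  have h1 := finrank_mono h
  rw [finrank_span_singleton hu0, show finrank K g = 2 from hg] at h1
  omega

theorem exists_pLine_mem (h : 1 < finrank K V) {v : V} (hv : v ≠ 0) :
    ∃ g : Submodule K V, PLine g ∧ v ∈ g := by
  obtain ⟨w, hvw⟩ := exists_linearIndependent_pair_of_one_lt_finrank h hv
  exact ⟨span K {v, w}, pLine_span_pair hvw, subset_span (Set.mem_insert v {w})⟩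

variable [FiniteDimensional K V]

theorem PLine.eq_of_le {x y : Submodule K V} (hx : PLine x) (hy : PLine y) (h : x ≤ y) : x = y :=
  eq_of_le_of_finrank_le h (by rw [hx, hy])

theorem finrank_inf_le_one {W g : Submodule K V} (hg : PLine g) (hgW : ¬ g ≤ W) :
    finrank K ↥(W ⊓ g) ≤ 1 := by
  have hlt : finrank K ↥(W ⊓ g) < finrank K g :=
    finrank_lt_finrank_of_lt (inf_le_right.lt_of_ne fun h => hgW (h ▸ inf_le_left))
  have hg2 : finrank K g = 2 := hg
  omega

theorem eq_of_le_of_finrank_le_one {P M : Submodule K V} (hPM : P ≤ M) (hP : P ≠ ⊥)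
    (hM : finrank K M ≤ 1) : P = M :=
  eq_of_le_of_finrank_le hPM (hM.trans (one_le_finrank_iff.mpr hP))

theorem inf_eq_inf_of_not_le {W g L₁ L₂ : Submodule K V} (hg : PLine g) (hgW : ¬ g ≤ W)
    (h₁ : L₁ ≤ W) (h₂ : L₂ ≤ W) (hm₁ : L₁ ⊓ g ≠ ⊥) (hm₂ : L₂ ⊓ g ≠ ⊥) : L₁ ⊓ g = L₂ ⊓ g := by
  have hW := finrank_inf_le_one hg hgW
  rw [eq_of_le_of_finrank_le_one (inf_le_inf_right g h₁) hm₁ hW,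
    eq_of_le_of_finrank_le_one (inf_le_inf_right g h₂) hm₂ hW]

theorem PMeetsTwo.le_sup {x y z : Submodule K V} (hx : PLine x) (h : PMeetsTwo x y z) :
    x ≤ y ⊔ z := by
  by_contra hle
  obtain ⟨⟨-, hy⟩, ⟨-, hz⟩, hne⟩ := h
  rw [inf_comm x y] at hy hne
  rw [inf_comm x z] at hz hne
  exact hne (inf_eq_inf_of_not_le hx hle le_sup_left le_sup_right hy hz)

theorem inf_eq_span_singleton {L g : Submodule K V} (hL : PLine L) (hg : PLine g) (hne : L ≠ g)
    {u : V} (huL : u ∈ L) (hug : u ∈ g) (hu0 : u ≠ 0) : L ⊓ g = K ∙ u :=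
  (eq_of_le_of_finrank_le_one ((span_singleton_le_iff_mem u _).mpr (mem_inf.mpr ⟨huL, hug⟩))
    (by simpa using hu0) (finrank_inf_le_one hg fun h => hne (hg.eq_of_le hL h).symm)).symm

theorem exists_pLine_disjoint {W : Submodule K V} (h : finrank K W + 2 ≤ finrank K V) :
    ∃ g, PLine g ∧ Disjoint W g := by
  obtain ⟨v, -, hv⟩ :=
    SetLike.exists_of_lt (lt_top_of_finrank_lt_finrank (R := K) (by omega) : W < ⊤)
  have hv0 : v ≠ 0 := by rintro rfl; exact hv W.zero_mem
  obtain ⟨w, -, hw⟩ := SetLike.exists_of_lt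
    (lt_top_of_finrank_lt_finrank (R := K)
      (by rw [finrank_sup_span_singleton hv]; omega) : W ⊔ K ∙ v < ⊤)
  have hw0 : w ≠ 0 := by rintro rfl; exact hw (zero_mem _)
  have hdisj : Disjoint (W ⊔ K ∙ v) (K ∙ w) := (disjoint_span_singleton' hw0).mpr hw
  refine ⟨span K {v, w}, pLine_span_pair (linearIndependent_pair_of_disjoint hdisj
    (mem_sup_right (mem_span_singleton_self v)) hv0 (mem_span_singleton_self w) hw0), ?_⟩
  rw [span_insert]
  exact ((disjoint_span_singleton' hv0).mpr hv).disjoint_sup_right_of_disjoint_sup_left hdisj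

end Lines

section Transversals

variable {K V : Type*} [DivisionRing K] [AddCommGroup V] [Module K V]

def IsTransversal (U A L : Submodule K V) : Prop :=
  ∃ r ∈ U, r ≠ 0 ∧ ∃ s ∈ A, s ≠ 0 ∧ L = span K {r, s}

theorem pMeetsTwo_span_pair {U A B : Submodule K V} (hUA : Disjoint U A) (hBU : B ≤ U)
    {r s : V} (hr : r ∈ B) (hr0 : r ≠ 0) (hs : s ∈ A) (hs0 : s ≠ 0) :
    PLine (span K {r, s}) ∧ PMeetsTwo (span K {r, s}) A B := by
  have hrL : r ∈ span K {r, s} := subset_span (Set.mem_insert r {s})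
  have hsL : s ∈ span K {r, s} := subset_span (Set.mem_insert_of_mem r rfl)
  have hrA : r ∉ A := fun h => hr0 (disjoint_def.mp hUA r (hBU hr) h)
  have hsU : s ∉ U := fun h => hs0 (disjoint_def.mp hUA s h hs)
  refine ⟨pLine_span_pair (linearIndependent_pair_of_disjoint hUA (hBU hr) hr0 hs hs0),
    ⟨fun h => hrA (h ▸ hrL), (Submodule.ne_bot_iff _).mpr ⟨s, mem_inf.mpr ⟨hsL, hs⟩, hs0⟩⟩,
    ⟨fun h => hsU (hBU (h ▸ hsL)),
      (Submodule.ne_bot_iff _).mpr ⟨r, mem_inf.mpr ⟨hrL, hr⟩, hr0⟩⟩,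
    fun h => hrA ?_⟩
  have hr' : r ∈ span K {r, s} ⊓ B := mem_inf.mpr ⟨hrL, hr⟩
  rw [← h] at hr'
  exact (mem_inf.mp hr').2

theorem IsTransversal.pLine {U A L : Submodule K V} (hUA : Disjoint U A)
    (hL : IsTransversal U A L) : PLine L := by
  obtain ⟨r, hr, hr0, s, hs, hs0, rfl⟩ := hL
  exact pLine_span_pair (linearIndependent_pair_of_disjoint hUA hr hr0 hs hs0)

variable {U A g : Submodule K V}

theorem exists_isTransversal_of_mem_right (hUg : ¬ U ≤ g) {v : V} (hvA : v ∈ A) (hv0 : v ≠ 0) :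
    ∃ L, IsTransversal U A L ∧ v ∈ L ∧ L ≠ g := by
  obtain ⟨r, hrU, hrg⟩ := SetLike.not_le_iff_exists.mp hUg
  have hr0 : r ≠ 0 := by rintro rfl; exact hrg g.zero_mem
  exact ⟨span K {r, v}, ⟨r, hrU, hr0, v, hvA, hv0, rfl⟩,
    subset_span (Set.mem_insert_of_mem r rfl),
    fun h => hrg (h ▸ subset_span (Set.mem_insert r {v}))⟩

variable [FiniteDimensional K V]

theorem exists_isTransversal_of_mem_left (hUA : Disjoint U A) (hA : PLine A) (hg : PLine g)
    {v : V} (hvU : v ∈ U) (hvg : v ∈ g) (hv0 : v ≠ 0) :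
    ∃ L, IsTransversal U A L ∧ v ∈ L ∧ L ≠ g := by
  have hAg : ¬ A ≤ g := fun h => hv0 (disjoint_def.mp hUA v hvU (hA.eq_of_le hg h ▸ hvg))
  obtain ⟨s, hsA, hsg⟩ := SetLike.not_le_iff_exists.mp hAg
  have hs0 : s ≠ 0 := by rintro rfl; exact hsg g.zero_mem
  exact ⟨span K {v, s}, ⟨v, hvU, hv0, s, hsA, hs0, rfl⟩, subset_span (Set.mem_insert v {s}),
    fun h => hsg (h ▸ subset_span (Set.mem_insert_of_mem v rfl))⟩

theorem exists_isTransversal_of_disjoint (hUA : Disjoint U A) (hsup : U ⊔ A = ⊤) (hA : PLine A)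
    (hg : PLine g) (hUg : ¬ U ≤ g) (hgUA : Disjoint g U ∨ Disjoint g A) {v : V} (hvg : v ∈ g)
    (hv0 : v ≠ 0) : ∃ L, IsTransversal U A L ∧ v ∈ L ∧ L ≠ g := by
  obtain ⟨p, hp, q, hq, rfl⟩ := mem_sup.mp (hsup ▸ mem_top : v ∈ U ⊔ A)
  rcases eq_or_ne p 0 with rfl | hp0
  · rw [zero_add] at hv0 ⊢
    exact exists_isTransversal_of_mem_right hUg hq hv0
  rcases eq_or_ne q 0 with rfl | hq0
  · rw [add_zero] at hvg hv0 ⊢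
    exact exists_isTransversal_of_mem_left hUA hA hg hp hvg hv0
  refine ⟨span K {p, q}, ⟨p, hp, hp0, q, hq, hq0, rfl⟩,
    add_mem (subset_span (Set.mem_insert p {q})) (subset_span (Set.mem_insert_of_mem p rfl)),
    fun h => ?_⟩
  have hpg : p ∈ g := h ▸ subset_span (Set.mem_insert p {q})
  have hqg : q ∈ g := h ▸ subset_span (Set.mem_insert_of_mem p rfl)
  rcases hgUA with hgU | hgA
  · exact hp0 (disjoint_def.mp hgU p hpg hp)
  · exact hq0 (disjoint_def.mp hgA q hqg hq)

theorem exists_isTransversal_pMeets_pair (hUA : Disjoint U A) (hsup : U ⊔ A = ⊤) (hA : PLine A)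
    (hU : 2 < finrank K U) (hg : PLine g) :
    ∃ L₁ L₂, IsTransversal U A L₁ ∧ IsTransversal U A L₂ ∧
      PMeets L₁ g ∧ PMeets L₂ g ∧ L₁ ⊓ g ≠ L₂ ⊓ g := by
  have hUg : ¬ U ≤ g := fun h => by
    have h2 := finrank_mono h
    rw [show finrank K g = 2 from hg] at h2
    omega
  suffices h : ∃ u ∈ g, u ≠ 0 ∧ ∃ w ∈ g, w ∉ K ∙ u ∧
      (∃ L, IsTransversal U A L ∧ u ∈ L ∧ L ≠ g) ∧ (∃ L, IsTransversal U A L ∧ w ∈ L ∧ L ≠ g) by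
    obtain ⟨u, hug, hu0, w, hwg, hwu, ⟨L₁, hT₁, huL, hne₁⟩, ⟨L₂, hT₂, hwL, hne₂⟩⟩ := h
    have hw0 : w ≠ 0 := by rintro rfl; exact hwu (zero_mem _)
    have h₁ := inf_eq_span_singleton (hT₁.pLine hUA) hg hne₁ huL hug hu0
    have h₂ := inf_eq_span_singleton (hT₂.pLine hUA) hg hne₂ hwL hwg hw0
    refine ⟨L₁, L₂, hT₁, hT₂, ⟨hne₁, by simpa [h₁]⟩, ⟨hne₂, by simpa [h₂]⟩, ?_⟩
    rw [h₁, h₂]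
    exact fun h => hwu (h ▸ mem_span_singleton_self w)
  by_cases hgUA : Disjoint g U ∨ Disjoint g A
  · obtain ⟨u, hug, hu0, w, hwg, hwu⟩ := hg.exists_pair
    have hw0 : w ≠ 0 := by rintro rfl; exact hwu (zero_mem _)
    exact ⟨u, hug, hu0, w, hwg, hwu,
      exists_isTransversal_of_disjoint hUA hsup hA hg hUg hgUA hug hu0,
      exists_isTransversal_of_disjoint hUA hsup hA hg hUg hgUA hwg hw0⟩
  · simp only [not_or, disjoint_def, not_forall] at hgUA
    obtain ⟨⟨u, hug, huU, hu0⟩, ⟨w, hwg, hwA, hw0⟩⟩ := hgUA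
    refine ⟨u, hug, hu0, w, hwg, fun h => hw0 (disjoint_def.mp hUA w ?_ hwA),
      exists_isTransversal_of_mem_left hUA hA hg huU hug hu0,
      exists_isTransversal_of_mem_right hUg hwA hw0⟩
    exact (span_singleton_le_iff_mem u U).mpr huU h

end Transversals

section Chains

variable {K V : Type*} [DivisionRing K] [AddCommGroup V] [Module K V]

def IsLineChain (b₁ : Submodule K V) (a b : ℕ → Submodule K V) (k : ℕ) : Prop :=
  b 1 = b₁ ∧ ∀ i, 2 ≤ i → i ≤ k → PLine (b i) ∧ PMeetsTwo (b i) (a (i - 1)) (b (i - 1))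

def IsLineFlag (U a : ℕ → Submodule K V) (m : ℕ) : Prop :=
  ∀ k, 1 ≤ k → k ≤ m → PLine (a k) ∧ Disjoint (U k) (a k) ∧ U (k + 1) = U k ⊔ a k

variable {b₁ : Submodule K V} {a b : ℕ → Submodule K V} {k : ℕ}

theorem IsLineChain.exists_succ (hch : IsLineChain b₁ a b k) (hk : 1 ≤ k) {U : Submodule K V}
    (hUa : Disjoint U (a k)) (hbU : b k ≤ U) {r s : V} (hr : r ∈ b k) (hr0 : r ≠ 0)
    (hs : s ∈ a k) (hs0 : s ≠ 0) :
    ∃ b', IsLineChain b₁ a b' (k + 1) ∧ b' (k + 1) = span K {r, s} := by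
  have hL := pMeetsTwo_span_pair hUa hbU hr hr0 hs hs0
  refine ⟨Function.update b (k + 1) (span K {r, s}), ⟨?_, fun i hi2 hik => ?_⟩,
    Function.update_self ..⟩
  · rw [Function.update_of_ne (by omega)]
    exact hch.1
  rcases (show i ≤ k ∨ i = k + 1 by omega) with hik | rfl
  · rw [Function.update_of_ne (by omega), Function.update_of_ne (by omega)]
    exact hch.2 i hi2 hik
  · rw [Function.update_self, Nat.add_sub_cancel, Function.update_of_ne (by omega)]
    exact hL

variable {U : ℕ → Submodule K V} {m : ℕ}

theorem IsLineFlag.exists_isLineChain (hF : IsLineFlag U a m) (hU₁ : PLine (U 1)) :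
    ∀ k, 1 ≤ k → k ≤ m + 1 → ∀ v ∈ U k,
      ∃ b, IsLineChain (U 1) a b k ∧ b k ≤ U k ∧ b k ≠ ⊥ ∧ v ∈ b k := by
  intro k hk
  induction k, hk using Nat.le_induction with
  | base =>
    exact fun _ v hv => ⟨fun _ => U 1, ⟨rfl, fun i _ _ => by omega⟩, le_rfl, hU₁.ne_bot, hv⟩
  | succ k hk ih =>
    intro hkm v hv
    obtain ⟨hak, hdisj, hsucc⟩ := hF k hk (by omega)
    rw [hsucc] at hv ⊢
    obtain ⟨p, hp, q, hq, rfl⟩ := mem_sup.mp hv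
    obtain ⟨b, hch, hbU, hb0, hpb⟩ := ih (by omega) p hp
    obtain ⟨r, hr, hr0, hpr⟩ := exists_ne_zero_mem_span_singleton hb0 hpb
    obtain ⟨s, hs, hs0, hqs⟩ := exists_ne_zero_mem_span_singleton hak.ne_bot hq
    obtain ⟨b', hch', hb'⟩ := hch.exists_succ hk hdisj hbU hr hr0 hs hs0
    refine ⟨b', hch', ?_, (hch'.2 (k + 1) (by omega) le_rfl).1.ne_bot, ?_⟩
    · rw [hb', span_le]
      rintro x (rfl | rfl)
      exacts [mem_sup_left (hbU hr), mem_sup_right hs]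
    · rw [hb']
      exact add_mem (span_mono (by simp) hpr) (span_mono (by simp) hqs)

theorem IsLineFlag.exists_isLineChain_of_isTransversal (hF : IsLineFlag U a m)
    (hU₁ : PLine (U 1)) (hm : 1 ≤ m) {L : Submodule K V} (hL : IsTransversal (U m) (a m) L) :
    ∃ b, IsLineChain (U 1) a b (m + 1) ∧ b (m + 1) = L := by
  obtain ⟨r, hr, hr0, s, hs, hs0, rfl⟩ := hL
  obtain ⟨b, hch, hbU, -, hrb⟩ := hF.exists_isLineChain hU₁ m hm (by omega) r hr
  exact hch.exists_succ hm (hF m hm le_rfl).2.1 hbU hrb hr0 hs hs0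

variable [FiniteDimensional K V]

theorem IsLineChain.le (hch : IsLineChain b₁ a b k) {W : Submodule K V} (hb₁W : b₁ ≤ W)
    (haW : ∀ i, 1 ≤ i → i < k → a i ≤ W) : ∀ i, 1 ≤ i → i ≤ k → b i ≤ W := by
  intro i hi
  induction i, hi using Nat.le_induction with
  | base => exact fun _ => hch.1 ▸ hb₁W
  | succ i hi ih =>
    intro hik
    obtain ⟨hline, hmeets⟩ := hch.2 (i + 1) (by omega) hik
    rw [Nat.add_sub_cancel] at hmeets
    exact (hmeets.le_sup hline).trans (sup_le (haW i hi (by omega)) (ih (by omega)))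

end Chains

section Flag

variable {K V : Type*} [DivisionRing K] [AddCommGroup V] [Module K V]

theorem finrank_sup_of_disjoint [FiniteDimensional K V] {W A : Submodule K V}
    (h : Disjoint W A) : finrank K ↥(W ⊔ A) = finrank K W + finrank K A := by
  have := finrank_sup_add_finrank_inf_eq W A
  rwa [h.eq_bot, finrank_bot, add_zero] at this

/-- Junk unless some line is disjoint from `W`. -/
noncomputable def complementLine (W : Submodule K V) : Submodule K V :=
  Classical.epsilon fun g => PLine g ∧ Disjoint W g

/-- `lineFlag b₁ a₁ j = (U (j + 1), a (j + 1))` in the notation of `IsLineFlag`. -/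
noncomputable def lineFlag (b₁ a₁ : Submodule K V) : ℕ → Submodule K V × Submodule K V
  | 0 => (b₁, a₁)
  | j + 1 =>
    ((lineFlag b₁ a₁ j).1 ⊔ (lineFlag b₁ a₁ j).2,
      complementLine ((lineFlag b₁ a₁ j).1 ⊔ (lineFlag b₁ a₁ j).2))

variable [FiniteDimensional K V] {b₁ a₁ : Submodule K V}

theorem lineFlag_spec (hb₁ : PLine b₁) (ha₁ : PLine a₁) (hdisj : Disjoint b₁ a₁) :
    ∀ j, 2 * j + 4 ≤ finrank K V → finrank K (lineFlag b₁ a₁ j).1 = 2 * j + 2 ∧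
      PLine (lineFlag b₁ a₁ j).2 ∧ Disjoint (lineFlag b₁ a₁ j).1 (lineFlag b₁ a₁ j).2
  | 0, _ => ⟨hb₁, ha₁, hdisj⟩
  | j + 1, hj => by
    obtain ⟨hfr, hline, hdisj'⟩ := lineFlag_spec hb₁ ha₁ hdisj j (by omega)
    have hfr' : finrank K (lineFlag b₁ a₁ (j + 1)).1 = 2 * (j + 1) + 2 := by
      rw [lineFlag, finrank_sup_of_disjoint hdisj', hfr, show finrank K _ = 2 from hline]
      omega
    exact ⟨hfr', Classical.epsilon_spec
      (exists_pLine_disjoint (W := (lineFlag b₁ a₁ (j + 1)).1) (by omega))⟩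

theorem exists_isLineFlag {m : ℕ} (hdim : finrank K V = 2 * m + 2) (hm : 1 ≤ m)
    (hb₁ : PLine b₁) (ha₁ : PLine a₁) (hdisj : Disjoint b₁ a₁) :
    ∃ U a, U 1 = b₁ ∧ a 1 = a₁ ∧ IsLineFlag U a m ∧ U (m + 1) = ⊤ := by
  refine ⟨fun k => (lineFlag b₁ a₁ (k - 1)).1, fun k => (lineFlag b₁ a₁ (k - 1)).2, rfl, rfl,
    fun k hk hkm => ?_, ?_⟩
  · obtain ⟨-, hline, hdisj'⟩ := lineFlag_spec hb₁ ha₁ hdisj (k - 1) (by omega)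
    obtain ⟨j, rfl⟩ : ∃ j, k = j + 1 := ⟨k - 1, by omega⟩
    exact ⟨hline, hdisj', rfl⟩
  · obtain ⟨j, rfl⟩ : ∃ j, m = j + 1 := ⟨m - 1, by omega⟩
    obtain ⟨hfr, hline, hdisj'⟩ := lineFlag_spec hb₁ ha₁ hdisj j (by omega)
    refine eq_top_of_finrank_eq ?_
    change finrank K ↥((lineFlag b₁ a₁ j).1 ⊔ (lineFlag b₁ a₁ j).2) = _
    rw [finrank_sup_of_disjoint hdisj', hfr, show finrank K _ = 2 from hline, hdim]
    ring

end Flag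

section Separation

variable {K V : Type*} [DivisionRing K] [AddCommGroup V] [Module K V] [FiniteDimensional K V]
  {b₁ : Submodule K V} {m : ℕ}

theorem exists_isLineChain_separating (hdim : finrank K V = 2 * m + 2) (hm : 2 ≤ m)
    {a₁ : Submodule K V} (hb₁ : PLine b₁) (ha₁ : PLine a₁) (hdisj : Disjoint b₁ a₁) :
    ∃ a : ℕ → Submodule K V, a 1 = a₁ ∧ (∀ i, 1 ≤ i → i ≤ m → PLine (a i)) ∧
      ∀ g, PLine g → ∃ b c, IsLineChain b₁ a b (m + 1) ∧ IsLineChain b₁ a c (m + 1) ∧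
        PMeets (b (m + 1)) g ∧ PMeets (c (m + 1)) g ∧ b (m + 1) ⊓ g ≠ c (m + 1) ⊓ g := by
  obtain ⟨U, a, rfl, rfl, hF, htop⟩ := exists_isLineFlag hdim (by omega) hb₁ ha₁ hdisj
  obtain ⟨ham, hdisjm, hsucc⟩ := hF m (by omega) le_rfl
  have hUm : 2 < finrank K (U m) := by
    have := finrank_sup_of_disjoint hdisjm
    rw [← hsucc, htop, finrank_top, show finrank K (a m) = 2 from ham] at this
    omega
  refine ⟨a, rfl, fun i hi him => (hF i hi him).1, fun g hg => ?_⟩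
  obtain ⟨L₁, L₂, hT₁, hT₂, h₁, h₂, hne⟩ :=
    exists_isTransversal_pMeets_pair hdisjm (hsucc ▸ htop) ham hUm hg
  obtain ⟨b, hb, rfl⟩ := hF.exists_isLineChain_of_isTransversal hb₁ (by omega) hT₁
  obtain ⟨c, hc, rfl⟩ := hF.exists_isLineChain_of_isTransversal hb₁ (by omega) hT₂
  exact ⟨b, c, hb, hc, h₁, h₂, hne⟩

theorem finrank_finset_sup_le {ι : Type*} (s : Finset ι) (f : ι → Submodule K V) :
    finrank K ↥(s.sup f) ≤ ∑ i ∈ s, finrank K ↥(f i) := by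
  classical
  induction s using Finset.induction_on with
  | empty => simp
  | insert i s hi ih =>
    rw [Finset.sup_insert, Finset.sum_insert hi]
    exact (finrank_add_le_finrank_add_finrank _ _).trans (by omega)

variable {a : ℕ → Submodule K V}

theorem finrank_sup_finset_sup_le (hm : 1 ≤ m) (hb₁ : PLine b₁)
    (ha : ∀ i, 1 ≤ i → i ≤ m → PLine (a i)) (hmeet : ¬ Disjoint b₁ (a 1)) :
    finrank K ↥(b₁ ⊔ a 1 ⊔ (Finset.Icc 2 m).sup a) ≤ 2 * m + 1 := by
  have hfirst : finrank K ↥(b₁ ⊔ a 1) ≤ 3 := by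
    have := finrank_sup_add_finrank_inf_eq b₁ (a 1)
    have := one_le_finrank_iff.mpr (mt disjoint_iff.mpr hmeet)
    rw [show finrank K b₁ = 2 from hb₁, show finrank K (a 1) = 2 from ha 1 le_rfl hm] at *
    omega
  have hrest : ∑ i ∈ Finset.Icc 2 m, finrank K ↥(a i) = 2 * (m - 1) := by
    rw [Finset.sum_congr rfl fun i hi => (show finrank K ↥(a i) = 2 from
      ha i (by have := (Finset.mem_Icc.mp hi).1; omega) (Finset.mem_Icc.mp hi).2),
      Finset.sum_const, Nat.card_Icc, smul_eq_mul]
    omega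
  have := finrank_add_le_finrank_add_finrank (b₁ ⊔ a 1) ((Finset.Icc 2 m).sup a)
  have := finrank_finset_sup_le (Finset.Icc 2 m) a
  omega

theorem exists_pLine_inf_eq_of_not_disjoint (hdim : finrank K V = 2 * m + 2) (hm : 1 ≤ m)
    (hb₁ : PLine b₁) (ha : ∀ i, 1 ≤ i → i ≤ m → PLine (a i)) (hmeet : ¬ Disjoint b₁ (a 1)) :
    ∃ g, PLine g ∧ ∀ b c, IsLineChain b₁ a b (m + 1) → IsLineChain b₁ a c (m + 1) →
      PMeets (b (m + 1)) g → PMeets (c (m + 1)) g → b (m + 1) ⊓ g = c (m + 1) ⊓ g := by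
  set W := b₁ ⊔ a 1 ⊔ (Finset.Icc 2 m).sup a
  have hW : finrank K W ≤ 2 * m + 1 := finrank_sup_finset_sup_le hm hb₁ ha hmeet
  obtain ⟨v, -, hv⟩ := SetLike.exists_of_lt (lt_top_of_finrank_lt_finrank (R := K) (s := W)
    (by omega))
  have hv0 : v ≠ 0 := by rintro rfl; exact hv W.zero_mem
  obtain ⟨g, hg, hvg⟩ := exists_pLine_mem (by omega : 1 < finrank K V) hv0
  have hb₁W : b₁ ≤ W := le_sup_left.trans le_sup_left
  have haW : ∀ i, 1 ≤ i → i < m + 1 → a i ≤ W := by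
    intro i hi him
    rcases (show i = 1 ∨ 2 ≤ i by omega) with rfl | hi2
    · exact le_sup_right.trans le_sup_left
    · exact (Finset.le_sup (Finset.mem_Icc.mpr ⟨hi2, by omega⟩)).trans le_sup_right
  exact ⟨g, hg, fun b c hb hc hbg hcg => inf_eq_inf_of_not_le hg (fun h => hv (h hvg))
    (hb.le hb₁W haW _ (by omega) le_rfl) (hc.le hb₁W haW _ (by omega) le_rfl) hbg.2 hcg.2⟩

end Separation

theorem statement4 {K V : Type*} [DivisionRing K] [AddCommGroup V] [Module K V]
    {n m : ℕ} (hn : 5 ≤ n) (hodd : Odd n) (hm : m = (n - 1) / 2)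
    (hdim : Module.finrank K V = n + 1)
    (a₁ b₁ : Submodule K V) (ha₁ : PLine a₁) (hb₁ : PLine b₁) :
    (a₁ = b₁ ∨ a₁ ⊓ b₁ = ⊥) ↔
    (a₁ = b₁ ∨ ∃ a : ℕ → Submodule K V, a 1 = a₁ ∧
      (∀ i, 2 ≤ i → i ≤ m → PLine (a i)) ∧
      ∀ g : Submodule K V, PLine g → ∃ b c : ℕ → Submodule K V, b 1 = b₁ ∧ c 1 = b₁ ∧
        (∀ i, 2 ≤ i → i ≤ m + 1 → PLine (b i) ∧ PLine (c i)) ∧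
        (∀ i, 2 ≤ i → i ≤ m + 1 →
          PMeetsTwo (b i) (a (i - 1)) (b (i - 1)) ∧ PMeetsTwo (c i) (a (i - 1)) (c (i - 1))) ∧
        PMeets (b (m + 1)) g ∧ PMeets (c (m + 1)) g ∧ b (m + 1) ⊓ g ≠ c (m + 1) ⊓ g) := by
  have hdim' : finrank K V = 2 * m + 2 := by obtain ⟨t, rfl⟩ := hodd; omega
  have : FiniteDimensional K V := .of_finrank_pos (by omega)
  constructor
  · rintro (heq | hdisj)
    · exact Or.inl heq
    obtain ⟨a, ha₁', ha, hsep⟩ :=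
      exists_isLineChain_separating hdim' (by omega) hb₁ ha₁ (disjoint_iff.mpr hdisj).symm
    refine Or.inr ⟨a, ha₁', fun i hi him => ha i (by omega) him, fun g hg => ?_⟩
    obtain ⟨b, c, hb, hc, hbg, hcg, hne⟩ := hsep g hg
    exact ⟨b, c, hb.1, hc.1, fun i hi him => ⟨(hb.2 i hi him).1, (hc.2 i hi him).1⟩,
      fun i hi him => ⟨(hb.2 i hi him).2, (hc.2 i hi him).2⟩, hbg, hcg, hne⟩
  · rintro (heq | ⟨a, rfl, ha, hsep⟩)
    · exact Or.inl heq
    refine Or.inr (disjoint_iff.mp (disjoint_comm.mp ?_))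
    by_contra hmeet
    have ha' : ∀ i, 1 ≤ i → i ≤ m → PLine (a i) := fun i hi him =>
      (show i = 1 ∨ 2 ≤ i by omega).elim (fun h => h ▸ ha₁) (ha i · him)
    obtain ⟨g, hg, hcollapse⟩ :=
      exists_pLine_inf_eq_of_not_disjoint hdim' (by omega) hb₁ ha' hmeet
    obtain ⟨b, c, hb1, hc1, hlines, hmeets, hbg, hcg, hne⟩ := hsep g hg
    exact hne (hcollapse b c
      ⟨hb1, fun i hi him => ⟨(hlines i hi him).1, (hmeets i hi him).1⟩⟩
      ⟨hc1, fun i hi him => ⟨(hlines i hi him).2, (hmeets i hi him).2⟩⟩ hbg hcg)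
end
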